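/- arXiv:1505.07633 — 3 statements merged into one kernel-verified Lean document; each statement's English description precedes it below -/
import Mathlib

section
/- Let K be a field with a nontrivial Krull valuation v into a linearly ordered abelian group Γ, and let A(x) = Σ_{i=0}^n a_i x^i ∈ K[x] be a polynomial of degree n that is an Eisenstein–Dumas polynomial at v. Then A(x) is irreducible in K[x]. -/
open Polynomial

/-- A Krull valuation on a field `K` with values in `Γ ∪ {∞}` (here `WithTop Γ`), where `Γ` is a
linearly ordered abelian group: `v a = ∞ ↔ a = 0`, `v (a*b) = v a + v b`, and
`v (a+b) ≥ min (v a) (v b)`. -/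
structure KrullValuation (K : Type*) [Field K] (Γ : Type*) [AddCommGroup Γ] [LinearOrder Γ] [IsOrderedAddMonoid Γ] where
  v : K → WithTop Γ
  eq_top_iff : ∀ a : K, v a = ⊤ ↔ a = 0
  map_mul : ∀ a b : K, v (a * b) = v a + v b
  min_le_add : ∀ a b : K, min (v a) (v b) ≤ v (a + b)

variable {K : Type*} [Field K] {Γ : Type*} [AddCommGroup Γ] [LinearOrder Γ] [IsOrderedAddMonoid Γ]

/-- The valuation `w` is nontrivial. -/
def KrullValuation.IsNontrivial (w : KrullValuation K Γ) : Prop :=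
  ∃ a : K, a ≠ 0 ∧ w.v a ≠ 0

/-- `A` is an Eisenstein–Dumas polynomial of degree `n` at the valuation `w`:
(D0) `a₀ * aₙ ≠ 0`, (D1) `v(a₀) − v(aₙ) ∉ kΓ` for every integer `k > 1` dividing `n`
(stated as: `v(a₀) ≠ v(aₙ) + k•g` for all `g ∈ Γ`),
(D2) `n·v(aᵢ) ≥ (n−i)·v(a₀) + i·v(aₙ)` for `0 ≤ i ≤ n`. -/
def IsEisensteinDumas (w : KrullValuation K Γ) (n : ℕ) (A : K[X]) : Prop :=
  A.natDegree = n ∧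
  A.coeff 0 * A.coeff n ≠ 0 ∧
  (∀ k : ℕ, 1 < k → k ∣ n → ∀ g : Γ,
    w.v (A.coeff 0) ≠ w.v (A.coeff n) + ((k • g : Γ) : WithTop Γ)) ∧
  (∀ i ≤ n, (n - i) • w.v (A.coeff 0) + i • w.v (A.coeff n) ≤ n • w.v (A.coeff i))

/-! Scale `v` by `n` and give `x` the value `δ = v(a₀) - v(aₙ)`: the Gauss valuation
`μ(∑ pᵢ xⁱ) = minᵢ (n • v(pᵢ) + i • δ)` is multiplicative, and (D2) says that
`μ(A) = n • v(a₀)`, a value attained by both extreme monomials of `A`. If `A = B * C` with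
`r = deg B`, then `μ(B) + μ(C) = μ(A)` forces both extreme monomials of `B` to attain `μ(B)` as
well, so `n • (v(b₀) - v(b_r)) = r • δ`. In the torsion-free group `Γ` this makes `δ` divisible
by `n / gcd(n, r)`, which (D1) forbids unless `n ∣ r`, i.e. unless `B` or `C` is constant. -/

theorem WithTop.nsmul_top {α : Type*} [AddMonoid α] {n : ℕ} (hn : n ≠ 0) :
    n • (⊤ : WithTop α) = ⊤ := by
  obtain ⟨m, rfl⟩ := Nat.exists_eq_succ_of_ne_zero hn
  rw [succ_nsmul, add_top]

theorem WithTop.left_eq_of_add_le_add {α : Type*} [AddCommMonoid α] [LinearOrder α]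
    [IsOrderedCancelAddMonoid α] {a b c d : WithTop α} (hac : a ≤ c) (hbd : b ≤ d)
    (h : c + d ≤ a + b) (hc : c ≠ ⊤) (hd : d ≠ ⊤) : a = c := by
  lift c to α using hc
  lift d to α using hd
  lift a to α using ne_top_of_le_ne_top coe_ne_top hac
  lift b to α using ne_top_of_le_ne_top coe_ne_top hbd
  norm_cast at *
  exact le_antisymm hac (le_of_add_le_add_right (h.trans (by gcongr)))

theorem exists_eq_nsmul_of_nsmul_eq_nsmul {G : Type*} [AddCommGroup G] [IsAddTorsionFree G]
    {n r : ℕ} {γ δ : G} (hn : n ≠ 0) (h : n • γ = r • δ) : ∃ g, δ = (n / n.gcd r) • g := by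
  obtain ⟨n', r', hcop, hn', hr'⟩ := Nat.exists_coprime n r
  have hd : n.gcd r ≠ 0 := Nat.gcd_ne_zero_left hn
  have h' : n' • γ = r' • δ := by
    apply nsmul_right_injective hd
    simp only [smul_smul, mul_comm (n.gcd r), ← hn', ← hr', h]
  obtain ⟨u, v, huv⟩ := Nat.isCoprime_iff_coprime.2 hcop
  rw [show n / n.gcd r = n' from Nat.div_eq_of_eq_mul_left (Nat.pos_of_ne_zero hd) hn']
  refine ⟨u • δ + v • γ, ?_⟩
  simp only [← natCast_zsmul] at h' ⊢
  linear_combination (norm := module) (-v) • h' - huv • δ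

namespace AddValuation

open Finset.HasAntidiagonal

variable {R : Type*} [Ring R] (v : AddValuation R (WithTop Γ)) (δ : Γ)

def gaussVal (p : R[X]) : WithTop Γ :=
  p.support.inf fun i => v (p.coeff i) + i • (δ : WithTop Γ)

variable {v δ} {p q : R[X]}

theorem gaussVal_le (p : R[X]) (i : ℕ) :
    gaussVal v δ p ≤ v (p.coeff i) + i • (δ : WithTop Γ) := by
  by_cases hi : i ∈ p.support
  · exact Finset.inf_le hi
  · rw [notMem_support_iff.mp hi, map_zero, top_add]
    exact le_top

theorem le_gaussVal_iff {t : WithTop Γ} :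
    t ≤ gaussVal v δ p ↔ ∀ i, t ≤ v (p.coeff i) + i • (δ : WithTop Γ) :=
  ⟨fun h i => h.trans (gaussVal_le p i), fun h => Finset.le_inf fun i _ => h i⟩

theorem exists_eq_gaussVal (hp : gaussVal v δ p ≠ ⊤) :
    ∃ i, v (p.coeff i) + i • (δ : WithTop Γ) = gaussVal v δ p ∧
      ∀ j < i, gaussVal v δ p < v (p.coeff j) + j • (δ : WithTop Γ) := by
  have hne : p.support.Nonempty :=
    Finset.nonempty_iff_ne_empty.2 fun h => hp (by simp [gaussVal, h])
  have hex : ∃ i, v (p.coeff i) + i • (δ : WithTop Γ) = gaussVal v δ p := by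
    obtain ⟨i, -, hi⟩ := Finset.exists_mem_eq_inf p.support hne
      fun i => v (p.coeff i) + i • (δ : WithTop Γ)
    exact ⟨i, hi.symm⟩
  refine ⟨Nat.find hex, Nat.find_spec hex, fun j hj => (gaussVal_le p j).lt_of_ne ?_⟩
  exact fun h => Nat.find_min hex hj h.symm

theorem gaussVal_le_mul (p q : R[X]) :
    gaussVal v δ p + gaussVal v δ q ≤ gaussVal v δ (p * q) := by
  refine le_gaussVal_iff.2 fun k => ?_
  rw [coeff_mul]
  obtain ⟨x, hx, hx_min⟩ := Finset.exists_min_image (antidiagonal k)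
    (fun x => v (p.coeff x.1 * q.coeff x.2)) ⟨(0, k), by simp⟩
  calc gaussVal v δ p + gaussVal v δ q
      ≤ v (p.coeff x.1) + x.1 • (δ : WithTop Γ) + (v (q.coeff x.2) + x.2 • (δ : WithTop Γ)) :=
        add_le_add (gaussVal_le p _) (gaussVal_le q _)
    _ = v (p.coeff x.1 * q.coeff x.2) + k • (δ : WithTop Γ) := by
        rw [map_mul, ← mem_antidiagonal.1 hx, add_nsmul]; abel
    _ ≤ _ := by gcongr; exact map_le_sum v hx_min

theorem val_coeff_mul_of_minimal {i j : ℕ}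
    (hi : v (p.coeff i) + i • (δ : WithTop Γ) = gaussVal v δ p)
    (hi_min : ∀ i' < i, gaussVal v δ p < v (p.coeff i') + i' • (δ : WithTop Γ))
    (hj : v (q.coeff j) + j • (δ : WithTop Γ) = gaussVal v δ q)
    (hj_min : ∀ j' < j, gaussVal v δ q < v (q.coeff j') + j' • (δ : WithTop Γ))
    (hp : gaussVal v δ p ≠ ⊤) (hq : gaussVal v δ q ≠ ⊤) :
    v ((p * q).coeff (i + j)) = v (p.coeff i * q.coeff j) := by
  have hpi : v (p.coeff i) ≠ ⊤ := fun h => hp (by rw [← hi, h, top_add])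
  have hqj : v (q.coeff j) ≠ ⊤ := fun h => hq (by rw [← hj, h, top_add])
  have hij : v (p.coeff i * q.coeff j) ≠ ⊤ := by
    rw [map_mul]; exact WithTop.add_ne_top.2 ⟨hpi, hqj⟩
  rw [coeff_mul,
    ← Finset.add_sum_erase _ _ (mem_antidiagonal.2 rfl : (i, j) ∈ antidiagonal (i + j))]
  refine map_add_eq_of_lt_left v (map_lt_sum v hij fun x hx => ?_)
  obtain ⟨hne, hx⟩ := Finset.mem_erase.1 hx
  rw [mem_antidiagonal] at hx
  have key : v (p.coeff i) + i • (δ : WithTop Γ) + (v (q.coeff j) + j • (δ : WithTop Γ)) <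
      v (p.coeff x.1) + x.1 • (δ : WithTop Γ) + (v (q.coeff x.2) + x.2 • (δ : WithTop Γ)) := by
    rw [hi, hj]
    rcases lt_or_gt_of_ne (show x.1 ≠ i from fun h => hne (Prod.ext h (by omega))) with h | h
    · exact WithTop.add_lt_add_of_lt_of_le hq (hi_min _ h) (gaussVal_le q _)
    · exact WithTop.add_lt_add_of_le_of_lt hp (gaussVal_le p _) (hj_min _ (by omega))
  rwa [add_add_add_comm, add_add_add_comm (v (p.coeff x.1)), ← add_nsmul, ← add_nsmul, hx,
    ← map_mul, ← map_mul, ← WithTop.coe_nsmul,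
    WithTop.add_lt_add_iff_right WithTop.coe_ne_top] at key

theorem gaussVal_mul (p q : R[X]) :
    gaussVal v δ (p * q) = gaussVal v δ p + gaussVal v δ q := by
  refine le_antisymm ?_ (gaussVal_le_mul p q)
  by_cases hp : gaussVal v δ p = ⊤
  · simp [hp]
  by_cases hq : gaussVal v δ q = ⊤
  · simp [hq]
  obtain ⟨i, hi, hi_min⟩ := exists_eq_gaussVal hp
  obtain ⟨j, hj, hj_min⟩ := exists_eq_gaussVal hq
  calc gaussVal v δ (p * q) ≤ v ((p * q).coeff (i + j)) + (i + j) • (δ : WithTop Γ) :=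
        gaussVal_le _ _
    _ = gaussVal v δ p + gaussVal v δ q := by
        rw [val_coeff_mul_of_minimal hi hi_min hj hj_min hp hq, map_mul, ← hi, ← hj, add_nsmul]
        abel

end AddValuation

namespace KrullValuation

variable (w : KrullValuation K Γ)

theorem v_zero : w.v 0 = ⊤ := (w.eq_top_iff 0).2 rfl

theorem v_ne_top {a : K} (ha : a ≠ 0) : w.v a ≠ ⊤ := fun h => ha ((w.eq_top_iff a).1 h)

theorem v_one : w.v 1 = 0 := by
  have h : w.v 1 + w.v 1 = w.v 1 + 0 := by rw [add_zero, ← w.map_mul, one_mul]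
  exact WithTop.add_left_cancel (w.v_ne_top one_ne_zero) h

theorem exists_v_eq_add {a b : K} (ha : a ≠ 0) (hb : b ≠ 0) : ∃ δ : Γ, w.v a = w.v b + δ := by
  obtain ⟨α, hα⟩ := WithTop.ne_top_iff_exists.1 (w.v_ne_top ha)
  obtain ⟨β, hβ⟩ := WithTop.ne_top_iff_exists.1 (w.v_ne_top hb)
  exact ⟨α - β, by rw [← hα, ← hβ, ← WithTop.coe_add, add_sub_cancel]⟩

def toAddValuation : AddValuation K (WithTop Γ) :=
  AddValuation.of w.v w.v_zero w.v_one w.min_le_add w.map_mul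

def nsmulAddValuation {n : ℕ} (hn : n ≠ 0) : AddValuation K (WithTop Γ) :=
  w.toAddValuation.map (nsmulAddMonoidHom n) (WithTop.nsmul_top hn)
    fun _ _ h => nsmul_le_nsmul_right h n

@[simp]
theorem nsmulAddValuation_apply {n : ℕ} (hn : n ≠ 0) (a : K) :
    w.nsmulAddValuation hn a = n • w.v a :=
  rfl

end KrullValuation

namespace IsEisensteinDumas

open AddValuation

variable {w : KrullValuation K Γ} {n : ℕ} {A : K[X]}

theorem natDegree_ne_zero (hA : IsEisensteinDumas w n A) : n ≠ 0 := by
  rintro rfl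
  exact hA.2.2.1 2 one_lt_two (dvd_zero 2) 0 (by simp)

theorem ne_zero (hA : IsEisensteinDumas w n A) : A ≠ 0 := fun h => hA.2.1 (by simp [h])

theorem nsmul_le_gaussVal (hA : IsEisensteinDumas w n A) {δ : Γ}
    (hδ : w.v (A.coeff 0) = w.v (A.coeff n) + δ) :
    n • w.v (A.coeff 0) ≤ gaussVal (w.nsmulAddValuation hA.natDegree_ne_zero) δ A := by
  refine le_gaussVal_iff.2 fun i => ?_
  rw [KrullValuation.nsmulAddValuation_apply]
  rcases le_or_gt i n with hi | hi
  · calc n • w.v (A.coeff 0)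
        = (n - i) • w.v (A.coeff 0) + i • w.v (A.coeff n) + i • (δ : WithTop Γ) := by
          rw [add_assoc, ← smul_add, ← hδ, ← add_nsmul, Nat.sub_add_cancel hi]
      _ ≤ n • w.v (A.coeff i) + i • (δ : WithTop Γ) := by gcongr; exact hA.2.2.2 i hi
  · have hAi : A.coeff i = 0 := coeff_eq_zero_of_natDegree_lt (by rwa [hA.1])
    rw [hAi, w.v_zero, WithTop.nsmul_top hA.natDegree_ne_zero, top_add]
    exact le_top

theorem exists_nsmul_eq_natDegree_nsmul (hA : IsEisensteinDumas w n A) {δ : Γ}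
    (hδ : w.v (A.coeff 0) = w.v (A.coeff n) + δ) {B C : K[X]} (hBC : A = B * C) :
    ∃ γ : Γ, n • γ = B.natDegree • δ := by
  set v := w.nsmulAddValuation hA.natDegree_ne_zero
  have hB : B ≠ 0 := left_ne_zero_of_mul (hBC ▸ hA.ne_zero)
  have hC : C ≠ 0 := right_ne_zero_of_mul (hBC ▸ hA.ne_zero)
  have h0 : B.coeff 0 * C.coeff 0 ≠ 0 := by
    rw [← mul_coeff_zero, ← hBC]; exact left_ne_zero_of_mul hA.2.1
  have hlow : n • w.v (A.coeff 0) ≤ gaussVal v δ B + gaussVal v δ C := by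
    rw [← gaussVal_mul, ← hBC]; exact hA.nsmul_le_gaussVal hδ
  have hbot : gaussVal v δ B = v (B.coeff 0) := by
    refine WithTop.left_eq_of_add_le_add (by simpa using gaussVal_le (δ := δ) B 0)
      (by simpa using gaussVal_le (δ := δ) C 0) ?_ ((ne_top_iff v).2 (left_ne_zero_of_mul h0))
      ((ne_top_iff v).2 (right_ne_zero_of_mul h0))
    rwa [← v.map_mul, ← mul_coeff_zero, ← hBC]
  have htop : gaussVal v δ B = v B.leadingCoeff + B.natDegree • (δ : WithTop Γ) := by
    refine WithTop.left_eq_of_add_le_add (gaussVal_le B _)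
      (gaussVal_le (v := v) (δ := δ) C C.natDegree) ?_ ?_ ?_
    · calc v B.leadingCoeff + B.natDegree • (δ : WithTop Γ)
            + (v C.leadingCoeff + C.natDegree • (δ : WithTop Γ))
          = v (B * C).leadingCoeff + (B * C).natDegree • (δ : WithTop Γ) := by
            rw [leadingCoeff_mul, v.map_mul, natDegree_mul hB hC, add_nsmul]; abel
        _ = n • w.v (A.coeff 0) := by
            rw [← hBC, leadingCoeff, hA.1, hδ, smul_add]; rfl
        _ ≤ _ := hlow
    all_goals exact WithTop.add_ne_top.2 ⟨(ne_top_iff v).2 (leadingCoeff_ne_zero.2 ‹_›),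
      by rw [← WithTop.coe_nsmul]; exact WithTop.coe_ne_top⟩
  obtain ⟨γ, hγ⟩ := w.exists_v_eq_add (left_ne_zero_of_mul h0) (leadingCoeff_ne_zero.2 hB)
  have h := hbot.symm.trans htop
  simp only [v, KrullValuation.nsmulAddValuation_apply, hγ, smul_add] at h
  rw [← WithTop.coe_nsmul, ← WithTop.coe_nsmul] at h
  exact ⟨γ, WithTop.coe_injective (WithTop.add_left_cancel
    ((ne_top_iff v).2 (leadingCoeff_ne_zero.2 hB)) h)⟩

theorem dvd_of_nsmul_eq_nsmul (hA : IsEisensteinDumas w n A) {δ : Γ}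
    (hδ : w.v (A.coeff 0) = w.v (A.coeff n) + δ) {γ : Γ} {r : ℕ} (h : n • γ = r • δ) :
    n ∣ r := by
  obtain ⟨g, hg⟩ := exists_eq_nsmul_of_nsmul_eq_nsmul hA.natDegree_ne_zero h
  by_contra hnr
  have hgcd : n.gcd r < n :=
    (Nat.le_of_dvd (Nat.pos_of_ne_zero hA.natDegree_ne_zero) (Nat.gcd_dvd_left n r)).lt_of_ne
      fun heq => hnr (heq ▸ Nat.gcd_dvd_right n r)
  have hk : 1 < n / n.gcd r :=
    (Nat.lt_div_iff_mul_lt' (Nat.gcd_dvd_left n r) 1).2 (by simpa using hgcd)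
  exact hA.2.2.1 _ hk (Nat.div_dvd_of_dvd (Nat.gcd_dvd_left n r)) g (by rw [hδ, hg])

end IsEisensteinDumas

theorem eisensteinDumas_irreducible_general (w : KrullValuation K Γ)
    (n : ℕ) (A : K[X]) (hA : IsEisensteinDumas w n A) :
    Irreducible A := by
  obtain ⟨δ, hδ⟩ := w.exists_v_eq_add (left_ne_zero_of_mul hA.2.1) (right_ne_zero_of_mul hA.2.1)
  refine ⟨fun hu => hA.natDegree_ne_zero (hA.1 ▸ natDegree_eq_zero_of_isUnit hu),
    fun B C hBC => or_iff_not_and_not.2 ?_⟩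
  rintro ⟨hBu, hCu⟩
  have hB : B ≠ 0 := left_ne_zero_of_mul (hBC ▸ hA.ne_zero)
  have hC : C ≠ 0 := right_ne_zero_of_mul (hBC ▸ hA.ne_zero)
  have hB_pos : 0 < B.natDegree :=
    natDegree_pos_iff_degree_pos.2 (degree_pos_of_ne_zero_of_nonunit hB hBu)
  have hC_pos : 0 < C.natDegree :=
    natDegree_pos_iff_degree_pos.2 (degree_pos_of_ne_zero_of_nonunit hC hCu)
  have hdeg : B.natDegree + C.natDegree = n := by rw [← natDegree_mul hB hC, ← hBC, hA.1]
  obtain ⟨γ, hγ⟩ := hA.exists_nsmul_eq_natDegree_nsmul hδ hBC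
  have hn_le : n ≤ B.natDegree := Nat.le_of_dvd hB_pos (hA.dvd_of_nsmul_eq_nsmul hδ hγ)
  omega

/-- Eisenstein–Dumas criterion: an Eisenstein–Dumas polynomial of degree `n` at a nontrivial
Krull valuation is irreducible in `K[x]`. -/
theorem eisensteinDumas_irreducible (w : KrullValuation K Γ) (hw : w.IsNontrivial)
    (n : ℕ) (A : K[X]) (hA : IsEisensteinDumas w n A) :
    Irreducible A :=
  eisensteinDumas_irreducible_general w n A hA
end

section
/- Let K be a field with a nontrivial Krull valuation v into a linearly ordered abelian group Γ, let A(x) = Σ_{i=0}^n a_i x^i ∈ K[x] have degree n (with a_0 ≠ 0 and n a_0 ≠ 0), and let B(x) = Σ_{i=0}^n a_{n−i} x^i be its reversal. Then U(B(x)) is the degree-n reversal of L(A(x)), i.e. U(B(x)) = x^n · L(A)(1/x); moreover, L(A(x)) is an Eisenstein–Dumas polynomial at v if and only if U(B(x)) is an Eisenstein–Dumas polynomial at v. -/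
open Polynomial

variable {K : Type*} [Field K] {Γ : Type*} [AddCommGroup Γ] [LinearOrder Γ] [IsOrderedAddMonoid Γ]

/-- For `A = Σ aᵢ xⁱ` of degree `n`, `U(A(x)) := A(x − a_{n−1}/(n·aₙ))`. -/
noncomputable def Upoly (n : ℕ) (A : K[X]) : K[X] :=
  A.comp (X - C (A.coeff (n - 1) / ((n : K) * A.coeff n)))

/-- For `A = Σ aᵢ xⁱ` of degree `n`,
`L(A(x)) := Σ_{i=0}^n aᵢ xⁱ (1 − (a₁/(n·a₀))x)^{n−i}`. -/
noncomputable def Lpoly (n : ℕ) (A : K[X]) : K[X] :=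
  ∑ i ∈ Finset.range (n + 1),
    C (A.coeff i) * X ^ i * (1 - C (A.coeff 1 / ((n : K) * A.coeff 0)) * X) ^ (n - i)

/-
The reflection `p ↦ xⁿ p(1/x)` turns the substitution `x ↦ x − c` into the twisting
`xⁱ ↦ xⁱ (1 − c x)ⁿ⁻ⁱ`, and it exchanges `a₁` with `b_{n−1}` and `a₀` with `bₙ`; this gives
the identity. The Eisenstein–Dumas conditions are symmetric under `aᵢ ↔ a_{n−i}` (for D1,
replace `g` by `−g`), so reflection preserves them, and being an involution it reflects them
too.
-/

namespace Polynomial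

section Semiring

variable {R : Type*} [Semiring R]

lemma reflect_sum {ι : Type*} (s : Finset ι) (f : ι → R[X]) (N : ℕ) :
    reflect N (∑ i ∈ s, f i) = ∑ i ∈ s, reflect N (f i) := by
  ext j
  simp only [coeff_reflect, finsetSum_coeff]

lemma coeff_reflect_of_le {N i : ℕ} (p : R[X]) (hi : i ≤ N) :
    (p.reflect N).coeff i = p.coeff (N - i) := by
  rw [coeff_reflect, revAt_le hi]

lemma reflect_pow {p : R[X]} {k : ℕ} (hp : p.natDegree ≤ k) (m : ℕ) :
    reflect (m * k) (p ^ m) = reflect k p ^ m := by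
  induction m with
  | zero => simp
  | succ m ih =>
    rw [pow_succ, Nat.succ_mul, reflect_mul _ _ (natDegree_pow_le_of_le m hp) hp, ih, pow_succ]

lemma natDegree_reflect_eq {p : R[X]} {N : ℕ} (hp : p.natDegree ≤ N) (h0 : p.coeff 0 ≠ 0) :
    (p.reflect N).natDegree = N :=
  le_antisymm (natDegree_reflect_le.trans (max_le le_rfl hp))
    (le_natDegree_of_ne_zero (by rwa [coeff_reflect_of_le p le_rfl, Nat.sub_self]))

end Semiring

section Ring

variable {R : Type*} [Ring R]

lemma natDegree_one_sub_C_mul_X_le (c : R) : (1 - C c * X).natDegree ≤ 1 :=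
  (natDegree_sub_le _ _).trans
    (max_le (by simp) ((natDegree_C_mul_le _ _).trans natDegree_X_le))

lemma reflect_one_sub_C_mul_X (c : R) : reflect 1 (1 - C c * X) = X - C c := by
  rw [reflect_sub, reflect_one, reflect_C_mul, reflect_one_X, pow_one, mul_one]

lemma reflect_X_pow_mul_one_sub_C_mul_X_pow (c : R) {i n : ℕ} (hi : i ≤ n) :
    reflect n (X ^ i * (1 - C c * X) ^ (n - i)) = (X - C c) ^ (n - i) := by
  obtain ⟨m, rfl⟩ := Nat.exists_eq_add_of_le hi
  have hpow := reflect_pow (natDegree_one_sub_C_mul_X_le c) m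
  rw [mul_one, reflect_one_sub_C_mul_X] at hpow
  rw [Nat.add_sub_cancel_left, reflect_mul _ _ (natDegree_X_pow_le i)
      ((natDegree_pow_le_of_le _ (natDegree_one_sub_C_mul_X_le c)).trans (mul_one _).le),
    reflect_monomial, revAt_le le_rfl, Nat.sub_self, pow_zero, one_mul, hpow]

end Ring

theorem reflect_comp_X_sub_C {R : Type*} [CommRing R] {p : R[X]} {n : ℕ}
    (hp : p.natDegree ≤ n) (c : R) :
    (p.reflect n).comp (X - C c) =
      (∑ i ∈ Finset.range (n + 1), C (p.coeff i) * X ^ i * (1 - C c * X) ^ (n - i)).reflect n := by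
  conv_lhs => rw [p.as_sum_range_C_mul_X_pow' (Nat.lt_succ_of_le hp)]
  rw [reflect_sum, reflect_sum, sum_comp]
  refine Finset.sum_congr rfl fun i hi => ?_
  have hin : i ≤ n := Nat.lt_succ_iff.mp (Finset.mem_range.mp hi)
  rw [reflect_C_mul_X_pow, revAt_le hin, mul_comp, C_comp, X_pow_comp, mul_assoc, reflect_C_mul,
    reflect_X_pow_mul_one_sub_C_mul_X_pow c hin]

end Polynomial

lemma WithTop.eq_add_coe_neg_of_eq_add_coe {G : Type*} [AddGroup G] {x y : WithTop G} {g : G}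
    (h : y = x + g) : x = y + ↑(-g) := by
  cases x with
  | top => simp [h]
  | coe a => rw [h, ← WithTop.coe_add, ← WithTop.coe_add, add_neg_cancel_right]

section EisensteinDumas

variable {w : KrullValuation K Γ} {n : ℕ} {L : K[X]}

theorem IsEisensteinDumas.reflect (h : IsEisensteinDumas w n L) :
    IsEisensteinDumas w n (L.reflect n) := by
  obtain ⟨hdeg, h0n, hD1, hD2⟩ := h
  have e0 : (L.reflect n).coeff 0 = L.coeff n := by rw [coeff_reflect_of_le L n.zero_le, n.sub_zero]
  have en : (L.reflect n).coeff n = L.coeff 0 := by rw [coeff_reflect_of_le L le_rfl, n.sub_self]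
  refine ⟨natDegree_reflect_eq hdeg.le (left_ne_zero_of_mul h0n), ?_, ?_, ?_⟩
  · rwa [e0, en, mul_comm]
  · intro k hk hkn g hEq
    rw [e0, en] at hEq
    refine hD1 k hk hkn (-g) ?_
    rw [neg_nsmul]
    exact WithTop.eq_add_coe_neg_of_eq_add_coe hEq
  · intro i hi
    rw [e0, en, coeff_reflect_of_le L hi, add_comm]
    simpa only [Nat.sub_sub_self hi] using hD2 (n - i) (Nat.sub_le _ _)

theorem isEisensteinDumas_reflect_iff :
    IsEisensteinDumas w n (L.reflect n) ↔ IsEisensteinDumas w n L :=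
  ⟨fun h => by simpa using h.reflect, IsEisensteinDumas.reflect⟩

end EisensteinDumas

theorem Upoly_reflect_eq_reflect_Lpoly_general (w : KrullValuation K Γ)
    (n : ℕ) (A : K[X]) (hdeg : A.natDegree = n)
    (hna0 : (n : K) * A.coeff 0 ≠ 0) :
    Upoly n (A.reflect n) = (Lpoly n A).reflect n ∧
    (IsEisensteinDumas w n (Lpoly n A) ↔ IsEisensteinDumas w n (Upoly n (A.reflect n))) := by
  have hn : 1 ≤ n := Nat.one_le_iff_ne_zero.mpr <| by rintro rfl; simp at hna0
  have hU : Upoly n (A.reflect n) = (Lpoly n A).reflect n := by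
    rw [Upoly, coeff_reflect_of_le A (Nat.sub_le n 1), Nat.sub_sub_self hn,
      coeff_reflect_of_le A le_rfl, Nat.sub_self]
    exact reflect_comp_X_sub_C hdeg.le _
  exact ⟨hU, by rw [hU, isEisensteinDumas_reflect_iff]⟩

/-- For `A` of degree `n` and its reversal `B(x) = Σ a_{n−i} xⁱ = reflect n A`, the polynomial
`U(B(x))` is the degree-`n` reversal of `L(A(x))`; moreover `L(A(x))` is an Eisenstein–Dumas
polynomial at `v` iff `U(B(x))` is. -/
theorem Upoly_reflect_eq_reflect_Lpoly (w : KrullValuation K Γ) (hw : w.IsNontrivial)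
    (n : ℕ) (A : K[X]) (hdeg : A.natDegree = n) (ha0 : A.coeff 0 ≠ 0)
    (hna0 : (n : K) * A.coeff 0 ≠ 0) :
    Upoly n (A.reflect n) = (Lpoly n A).reflect n ∧
    (IsEisensteinDumas w n (Lpoly n A) ↔ IsEisensteinDumas w n (Upoly n (A.reflect n))) :=
  Upoly_reflect_eq_reflect_Lpoly_general w n A hdeg hna0
end

section
/- Let K be a field with a nontrivial Krull valuation v into a linearly ordered abelian group Γ, A(x) ∈ K[x], and t ∈ K, t ≠ 0. Then A(tx) is an Eisenstein–Dumas polynomial at v if and only if A(x) is an Eisenstein–Dumas polynomial at v. -/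
open Polynomial

variable {K : Type*} [Field K] {Γ : Type*} [AddCommGroup Γ] [LinearOrder Γ] [IsOrderedAddMonoid Γ]

namespace Polynomial

theorem coeff_comp_C_mul_X {R : Type*} [CommSemiring R] (p : R[X]) (t : R) (i : ℕ) :
    (p.comp (C t * X)).coeff i = p.coeff i * t ^ i := by
  rw [comp, eval₂_eq_sum, Polynomial.sum, finsetSum_coeff]
  simp only [mul_pow, ← C_pow, ← mul_assoc, ← C_mul, coeff_C_mul, coeff_X_pow]
  rw [Finset.sum_eq_single i]
  · simp
  · intro j _ hj
    simp [Ne.symm hj]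
  · intro hi
    simp [notMem_support_iff.mp hi]

end Polynomial

namespace KrullValuation

variable (w : KrullValuation K Γ)

theorem v_pow (a : K) (i : ℕ) : w.v (a ^ i) = i • w.v a := by
  induction i with
  | zero => simp [v_one]
  | succ m ih => rw [pow_succ, w.map_mul, ih, succ_nsmul]

end KrullValuation

variable {w : KrullValuation K Γ} {n : ℕ}

/-- Each Eisenstein–Dumas condition compares terms of equal total weight in the index, so the
shifts `i • γ` cancel. -/
theorem IsEisensteinDumas.of_v_coeff_eq_add_nsmul {A B : K[X]} (γ : Γ)
    (hdeg : B.natDegree = A.natDegree)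
    (hv : ∀ i : ℕ, w.v (B.coeff i) = w.v (A.coeff i) + ((i • γ : Γ) : WithTop Γ))
    (hA : IsEisensteinDumas w n A) : IsEisensteinDumas w n B := by
  obtain ⟨hAdeg, hA0, hA1, hA2⟩ := hA
  have hv0 : w.v (B.coeff 0) = w.v (A.coeff 0) := by simpa using hv 0
  have hB_ne : ∀ i, A.coeff i ≠ 0 → B.coeff i ≠ 0 := fun i hi hBi => by
    have := hv i
    rw [hBi, (w.eq_top_iff 0).mpr rfl, eq_comm, WithTop.add_eq_top] at this
    exact this.elim (w.v_ne_top hi) WithTop.coe_ne_top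
  refine ⟨hdeg.trans hAdeg, ?_, ?_, ?_⟩
  · obtain ⟨h0, hn⟩ := mul_ne_zero_iff.mp hA0
    exact mul_ne_zero (hB_ne 0 h0) (hB_ne n hn)
  · rintro k hk ⟨m, rfl⟩ g
    have hshift : (((k * m) • γ : Γ) : WithTop Γ) + ((k • g : Γ) : WithTop Γ)
        = ((k • (g + m • γ) : Γ) : WithTop Γ) := by
      rw [← WithTop.coe_add, smul_add, smul_smul, add_comm]
    rw [hv0, hv, add_assoc, hshift]
    exact hA1 k hk ⟨m, rfl⟩ (g + m • γ)
  · intro i hi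
    rw [hv0, hv, hv, smul_add, smul_add, ← WithTop.coe_nsmul, ← WithTop.coe_nsmul,
      smul_smul, smul_smul, mul_comm i n, ← add_assoc]
    exact add_le_add_left (hA2 i hi) _

theorem IsEisensteinDumas.comp_C_mul_X {A : K[X]} {t : K} (ht : t ≠ 0)
    (hA : IsEisensteinDumas w n A) : IsEisensteinDumas w n (A.comp (C t * X)) := by
  obtain ⟨γ, hγ⟩ := WithTop.ne_top_iff_exists.mp (w.v_ne_top ht)
  refine hA.of_v_coeff_eq_add_nsmul γ ?_ fun i => ?_
  · rw [natDegree_comp, natDegree_C_mul_X t ht, mul_one]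
  · rw [coeff_comp_C_mul_X, w.map_mul, w.v_pow, ← hγ, WithTop.coe_nsmul]

theorem scale_eisensteinDumas_iff_general (w : KrullValuation K Γ)
    (n : ℕ) (A : K[X]) (t : K) (ht : t ≠ 0) :
    IsEisensteinDumas w n (A.comp (C t * X)) ↔ IsEisensteinDumas w n A := by
  refine ⟨fun h => ?_, IsEisensteinDumas.comp_C_mul_X ht⟩
  have hinv : (A.comp (C t * X)).comp (C t⁻¹ * X) = A := by
    simp [comp_assoc, mul_comp, ← mul_assoc, ← C_mul, mul_inv_cancel₀ ht]
  simpa only [hinv] using h.comp_C_mul_X (inv_ne_zero ht)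

/-- For `t ≠ 0`, `A(tx)` is an Eisenstein–Dumas polynomial at `v` iff `A(x)` is. -/
theorem scale_eisensteinDumas_iff (w : KrullValuation K Γ) (hw : w.IsNontrivial)
    (n : ℕ) (A : K[X]) (t : K) (ht : t ≠ 0) :
    IsEisensteinDumas w n (A.comp (C t * X)) ↔ IsEisensteinDumas w n A :=
  scale_eisensteinDumas_iff_general w n A t ht
end
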